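/- arXiv:1505.03075 — 2 statements merged into one kernel-verified Lean document; each statement's English description precedes it below -/
import Mathlib

section
/- For 0 < α < 1 and any real λ ≠ 0, one has (iλ)^{α} = (1/Γ(-α)) ∫₀^∞ (e^{-iλt} - 1) t^{-(1+α)} dt, where the integral is understood as an improper integral and (iλ)^{α} uses the principal branch. -/
/-!
Write `F(z) = ∫₀^∞ (e^{-zt} - 1) t^{-(1+s)} dt` for `0 < Re s < 1` and `Re z ≥ 0`; the bound
`|e^{-zt} - 1| ≤ min (2|z|t) 2` makes the integrand absolutely integrable, so the improper integral
is the Lebesgue integral. For real `x > 0`, integration by parts gives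
`F(x) = -(x/s) ∫₀^∞ t^{-s} e^{-xt} dt = -(x/s) Γ(1-s) x^{s-1} = Γ(-s) x^s`.
Both sides are holomorphic on `Re z > 0`, so they agree there by the identity theorem, and both are
continuous on `Re z ≥ 0` (dominated convergence), which gives the value at `z = iλ`.
-/

open Real MeasureTheory Filter Set Topology

theorem Complex.norm_exp_sub_one_le_min {w : ℂ} (hw : w.re ≤ 0) :
    ‖Complex.exp w - 1‖ ≤ min (2 * ‖w‖) 2 := by
  have h2 : ‖Complex.exp w - 1‖ ≤ 2 := by
    calc ‖Complex.exp w - 1‖ ≤ ‖Complex.exp w‖ + ‖(1 : ℂ)‖ := norm_sub_le _ _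
      _ ≤ 1 + 1 := by
        rw [Complex.norm_exp, norm_one]
        gcongr
        exact Real.exp_le_one_iff.mpr hw
      _ = 2 := by norm_num
  rcases le_total ‖w‖ 1 with hw1 | hw1
  · exact le_min (Complex.norm_exp_sub_one_le hw1) h2
  · exact le_min (h2.trans (by linarith)) h2

theorem norm_exp_neg_mul_sub_one_le {z : ℂ} (hz : 0 ≤ z.re) {t : ℝ} (ht : 0 ≤ t) :
    ‖Complex.exp (-(z * t)) - 1‖ ≤ min (2 * ‖z‖ * t) 2 := by
  have h := Complex.norm_exp_sub_one_le_min (w := -(z * t)) (by simpa using mul_nonneg hz ht)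
  rwa [norm_neg, norm_mul, Complex.norm_real, Real.norm_of_nonneg ht, ← mul_assoc] at h

theorem integrableOn_Ioi_min_mul_mul_rpow {σ c d : ℝ} (hσ0 : 0 < σ) (hσ1 : σ < 1) (hc : 0 ≤ c)
    (hd : 0 ≤ d) : IntegrableOn (fun t : ℝ => min (c * t) d * t ^ (-(1 + σ))) (Ioi 0) := by
  have hcont : ContinuousOn (fun t : ℝ => min (c * t) d * t ^ (-(1 + σ))) (Ioi 0) :=
    ((continuous_const.mul continuous_id).min continuous_const).continuousOn.mul
      fun t ht => (continuousAt_rpow_const t _ (Or.inl (ne_of_gt ht))).continuousWithinAt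
  have hnorm : ∀ t : ℝ, 0 < t →
      ‖min (c * t) d * t ^ (-(1 + σ))‖ = min (c * t) d * t ^ (-(1 + σ)) := fun t ht =>
    Real.norm_of_nonneg (by positivity)
  rw [← Ioc_union_Ioi_eq_Ioi zero_le_one]
  refine IntegrableOn.union ?_ ?_
  · refine Integrable.mono' (g := fun t => c * t ^ (-σ)) ?_
      ((hcont.mono Ioc_subset_Ioi_self).aestronglyMeasurable measurableSet_Ioc) ?_
    · exact (intervalIntegral.intervalIntegrable_rpow' (by linarith)).1.const_mul _
    filter_upwards [ae_restrict_mem measurableSet_Ioc] with t ht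
    calc ‖min (c * t) d * t ^ (-(1 + σ))‖ ≤ c * t * t ^ (-(1 + σ)) := by
          rw [hnorm t ht.1]
          exact mul_le_mul_of_nonneg_right (min_le_left _ _) (rpow_nonneg ht.1.le _)
      _ = c * t ^ (-σ) := by
          rw [mul_assoc, ← Real.rpow_one_add' ht.1.le (by linarith)]; ring_nf
  · refine Integrable.mono' (g := fun t => d * t ^ (-(1 + σ)))
      ((integrableOn_Ioi_rpow_of_lt (by linarith) one_pos).const_mul d)
      ((hcont.mono (Ioi_subset_Ioi zero_le_one)).aestronglyMeasurable measurableSet_Ioi) ?_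
    filter_upwards [ae_restrict_mem measurableSet_Ioi] with t ht
    rw [hnorm t (one_pos.trans ht)]
    exact mul_le_mul_of_nonneg_right (min_le_right _ _) (rpow_nonneg (one_pos.trans ht).le _)

theorem tendsto_intervalIntegral_integral_Ioi {ι E : Type*} [NormedAddCommGroup E]
    [NormedSpace ℝ E] {l : Filter ι} [l.IsCountablyGenerated] {a b : ι → ℝ} {f : ℝ → E} {A : ℝ}
    (hf : IntegrableOn f (Ioi A)) (ha : Tendsto a l (𝓝[>] A)) (hb : Tendsto b l atTop) :
    Tendsto (fun i => ∫ x in a i..b i, f x) l (𝓝 (∫ x in Ioi A, f x)) := by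
  have hφ : AECover (volume.restrict (Ioi A)) l fun i => Ioi (a i) ∩ Iic (b i) :=
    (aecover_Ioi_of_Ioi (tendsto_nhds_of_tendsto_nhdsWithin ha)).inter (aecover_Iic hb).restrict
  refine (hφ.integral_tendsto_of_countably_generated hf).congr' ?_
  filter_upwards [ha.eventually self_mem_nhdsWithin,
    (tendsto_nhds_of_tendsto_nhdsWithin ha).eventually (eventually_lt_nhds (lt_add_one A)),
    hb.eventually (eventually_ge_atTop (A + 1))] with i (hai : A < a i) hai' hbi
  rw [intervalIntegral.integral_of_le (hai'.le.trans hbi),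
    Measure.restrict_restrict (measurableSet_Ioi.inter measurableSet_Iic), Ioi_inter_Iic,
    Ioc_inter_Ioi, sup_of_le_left hai.le]

noncomputable def stableKernel (s z : ℂ) (t : ℝ) : ℂ :=
  (Complex.exp (-(z * t)) - 1) * (t : ℂ) ^ (-(1 + s))

variable {s z : ℂ}

theorem continuousOn_stableKernel (s z : ℂ) : ContinuousOn (stableKernel s z) (Ioi 0) :=
  (Continuous.continuousOn (by fun_prop)).mul fun t ht =>
    (Complex.continuousAt_ofReal_cpow_const t _ (Or.inr (ne_of_gt ht))).continuousWithinAt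

theorem norm_stableKernel_le (hz : 0 ≤ z.re) {t : ℝ} (ht : 0 < t) :
    ‖stableKernel s z t‖ ≤ min (2 * ‖z‖ * t) 2 * t ^ (-(1 + s.re)) := by
  rw [stableKernel, norm_mul, Complex.norm_cpow_eq_rpow_re_of_pos ht]
  simpa using mul_le_mul_of_nonneg_right (norm_exp_neg_mul_sub_one_le hz ht.le)
    (rpow_nonneg ht.le (-(1 + s.re)))

theorem integrableOn_cpow_mul_exp_neg_mul {a : ℂ} (ha : 0 < a.re) (hz : 0 < z.re) :
    IntegrableOn (fun t : ℝ => (t : ℂ) ^ (a - 1) * Complex.exp (-(z * t))) (Ioi 0) := by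
  refine Integrable.mono' (integrableOn_rpow_mul_exp_neg_mul_rpow (s := a.re - 1) (p := 1)
    (by linarith) one_pos hz) ?_ ?_
  · refine ContinuousOn.aestronglyMeasurable (fun t ht => ?_) measurableSet_Ioi
    exact ((Complex.continuousAt_ofReal_cpow_const t _ (Or.inr (ne_of_gt ht))).mul
      (by fun_prop)).continuousWithinAt
  · filter_upwards [ae_restrict_mem measurableSet_Ioi] with t (ht : 0 < t)
    rw [norm_mul, Complex.norm_cpow_eq_rpow_re_of_pos ht, Complex.norm_exp]
    simp

theorem tendsto_exp_neg_mul_sub_one_mul_cpow_atTop (hs : 0 < s.re) (hz : 0 ≤ z.re) :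
    Tendsto (fun t : ℝ => (Complex.exp (-(z * t)) - 1) * (t : ℂ) ^ (-s)) atTop (𝓝 0) := by
  refine squeeze_zero_norm' (a := fun t : ℝ => 2 * t ^ (-s.re)) ?_ ?_
  · filter_upwards [eventually_gt_atTop 0] with t ht
    rw [norm_mul, Complex.norm_cpow_eq_rpow_re_of_pos ht, Complex.neg_re]
    exact mul_le_mul_of_nonneg_right ((norm_exp_neg_mul_sub_one_le hz ht.le).trans
      (min_le_right _ _)) (rpow_nonneg ht.le _)
  · simpa using (tendsto_rpow_neg_atTop hs).const_mul 2

theorem tendsto_exp_neg_mul_sub_one_mul_cpow_nhdsGT_zero (hs : s.re < 1) (hz : 0 ≤ z.re) :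
    Tendsto (fun t : ℝ => (Complex.exp (-(z * t)) - 1) * (t : ℂ) ^ (-s)) (𝓝[>] 0) (𝓝 0) := by
  refine squeeze_zero_norm' (a := fun t : ℝ => 2 * ‖z‖ * t ^ (1 - s.re)) ?_ ?_
  · filter_upwards [self_mem_nhdsWithin] with t (ht : 0 < t)
    rw [norm_mul, Complex.norm_cpow_eq_rpow_re_of_pos ht, Complex.neg_re, sub_eq_add_neg 1,
      rpow_add ht, rpow_one, ← mul_assoc]
    exact mul_le_mul_of_nonneg_right ((norm_exp_neg_mul_sub_one_le hz ht.le).trans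
      (min_le_left _ _)) (rpow_nonneg ht.le _)
  · have h := ((continuousAt_rpow_const 0 (1 - s.re) (Or.inr (by linarith))).tendsto).mono_left
      (nhdsWithin_le_nhds (s := Ioi 0))
    rw [zero_rpow (by linarith)] at h
    simpa using h.const_mul (2 * ‖z‖)

theorem integrableOn_stableKernel (hs0 : 0 < s.re) (hs1 : s.re < 1) (hz : 0 ≤ z.re) :
    IntegrableOn (stableKernel s z) (Ioi 0) :=
  Integrable.mono' (integrableOn_Ioi_min_mul_mul_rpow hs0 hs1 (by positivity) zero_le_two)
    ((continuousOn_stableKernel s z).aestronglyMeasurable measurableSet_Ioi)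
    ((ae_restrict_mem measurableSet_Ioi).mono fun _ ht => norm_stableKernel_le hz ht)

theorem integral_stableKernel_eq_neg_div_mul (hs0 : 0 < s.re) (hs1 : s.re < 1) (hz : 0 < z.re) :
    ∫ t in Ioi 0, stableKernel s z t =
      -(z / s) * ∫ t : ℝ in Ioi 0, (t : ℂ) ^ ((1 - s) - 1) * Complex.exp (-(z * t)) := by
  have hs : s ≠ 0 := by rintro rfl; simp at hs0
  have hu : ∀ t ∈ Ioi (0 : ℝ), HasDerivAt (fun t : ℝ => Complex.exp (-(z * t)) - 1)
      (-z * Complex.exp (-(z * t))) t := fun t _ => by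
    simpa [mul_comm] using
      (((Complex.ofRealCLM.hasDerivAt (x := t)).const_mul z).neg.cexp).sub_const 1
  have hv : ∀ t ∈ Ioi (0 : ℝ), HasDerivAt (fun t : ℝ => (t : ℂ) ^ (-s) / -s)
      ((t : ℂ) ^ (-(1 + s))) t := fun t (ht : 0 < t) => by
    simpa [show -(1 + s) + 1 = -s by ring] using
      hasDerivAt_ofReal_cpow_const' ht.ne' (r := -(1 + s)) (by simpa using hs)
  have hboundary : ∀ l : Filter ℝ,
      Tendsto (fun t : ℝ => (Complex.exp (-(z * t)) - 1) * (t : ℂ) ^ (-s)) l (𝓝 0) →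
      Tendsto ((fun t : ℝ => Complex.exp (-(z * t)) - 1) * fun t : ℝ => (t : ℂ) ^ (-s) / -s)
        l (𝓝 0) := fun l h => by
    simpa only [Pi.mul_def, mul_div_assoc, zero_div] using h.div_const (-s)
  have hv' : IntegrableOn ((fun t : ℝ => Complex.exp (-(z * t)) - 1) *
      fun t : ℝ => (t : ℂ) ^ (-(1 + s))) (Ioi 0) :=
    integrableOn_stableKernel hs0 hs1 hz.le
  have hu' : IntegrableOn ((fun t : ℝ => -z * Complex.exp (-(z * t))) *
      fun t : ℝ => (t : ℂ) ^ (-s) / -s) (Ioi 0) := by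
    refine IntegrableOn.congr_fun ((integrableOn_cpow_mul_exp_neg_mul (a := 1 - s)
      (by simpa using hs1) hz).const_mul (z / s)) (fun t _ => ?_) measurableSet_Ioi
    simp only [Pi.mul_apply, sub_sub_cancel_left]
    field_simp
  have h := integral_Ioi_mul_deriv_eq_deriv_mul hu hv hv' hu'
    (hboundary _ (tendsto_exp_neg_mul_sub_one_mul_cpow_nhdsGT_zero hs1 hz.le))
    (hboundary _ (tendsto_exp_neg_mul_sub_one_mul_cpow_atTop hs0 hz.le))
  rw [← integral_const_mul, show ∫ t in Ioi 0, stableKernel s z t = _ from h, sub_self,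
    zero_sub, ← integral_neg]
  refine setIntegral_congr_fun measurableSet_Ioi fun t _ => ?_
  simp only [sub_sub_cancel_left]
  field_simp

theorem integral_stableKernel_ofReal (hs0 : 0 < s.re) (hs1 : s.re < 1) {x : ℝ} (hx : 0 < x) :
    ∫ t in Ioi 0, stableKernel s x t = Complex.Gamma (-s) * (x : ℂ) ^ s := by
  have hs : s ≠ 0 := by rintro rfl; simp at hs0
  have hx' : (x : ℂ) ≠ 0 := Complex.ofReal_ne_zero.mpr hx.ne'
  rw [integral_stableKernel_eq_neg_div_mul hs0 hs1 (by simpa using hx),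
    Complex.integral_cpow_mul_exp_neg_mul_Ioi (by simpa using hs1) hx, sub_eq_neg_add,
    Complex.Gamma_add_one _ (neg_ne_zero.mpr hs), one_div,
    Complex.inv_cpow _ _ (by simp [Complex.arg_ofReal_of_nonneg hx.le, Real.pi_ne_zero.symm]),
    Complex.cpow_add _ _ hx', Complex.cpow_one, Complex.cpow_neg]
  field_simp

theorem hasDerivAt_stableKernel (s z : ℂ) (t : ℝ) :
    HasDerivAt (fun w => stableKernel s w t) (-t * Complex.exp (-(z * t)) * (t : ℂ) ^ (-(1 + s)))
      z := by
  simpa [stableKernel, mul_comm] using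
    ((((hasDerivAt_id z).mul_const (t : ℂ)).neg.cexp).sub_const 1).mul_const ((t : ℂ) ^ (-(1 + s)))

theorem differentiableAt_integral_stableKernel (hs0 : 0 < s.re) (hs1 : s.re < 1)
    (hz : 0 < z.re) : DifferentiableAt ℂ (fun w => ∫ t in Ioi 0, stableKernel s w t) z := by
  have hδ : 0 < z.re / 2 := by linarith
  refine (hasDerivAt_integral_of_dominated_loc_of_deriv_le
    (bound := fun t : ℝ => t ^ (-s.re) * Real.exp (-(z.re / 2) * t ^ (1 : ℝ)))
    ((isOpen_lt continuous_const Complex.continuous_re).mem_nhds (by linarith : z.re / 2 < z.re))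
    (Eventually.of_forall fun w =>
      (continuousOn_stableKernel s w).aestronglyMeasurable measurableSet_Ioi)
    (integrableOn_stableKernel hs0 hs1 hz.le) ?_ ?_
    (integrableOn_rpow_mul_exp_neg_mul_rpow (by linarith) one_pos hδ)
    (Eventually.of_forall fun t w _ => hasDerivAt_stableKernel s w t)).2.differentiableAt
  · refine ContinuousOn.aestronglyMeasurable (fun t ht => ?_) measurableSet_Ioi
    exact ((Continuous.continuousAt (by fun_prop)).mul
      (Complex.continuousAt_ofReal_cpow_const t _ (Or.inr (ne_of_gt ht)))).continuousWithinAt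
  · filter_upwards [ae_restrict_mem measurableSet_Ioi] with t (ht : 0 < t) w (hw : z.re / 2 < w.re)
    rw [norm_mul, norm_mul, norm_neg, Complex.norm_real, Real.norm_of_nonneg ht.le,
      Complex.norm_exp, Complex.norm_cpow_eq_rpow_re_of_pos ht, rpow_one]
    calc t * Real.exp (-(w * t)).re * t ^ (-(1 + s)).re
        = t ^ (-s.re) * Real.exp (-(w.re * t)) := by
          rw [mul_right_comm, ← rpow_one_add' ht.le (by simp [hs0.ne'])]
          simp [mul_comm]
      _ ≤ t ^ (-s.re) * Real.exp (-(z.re / 2) * t) := by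
          gcongr
          nlinarith

theorem continuousOn_integral_stableKernel (hs0 : 0 < s.re) (hs1 : s.re < 1) :
    ContinuousOn (fun w => ∫ t in Ioi 0, stableKernel s w t) {w | 0 ≤ w.re} := by
  intro z _
  refine continuousWithinAt_of_dominated
    (bound := fun t : ℝ => min (2 * (‖z‖ + 1) * t) 2 * t ^ (-(1 + s.re)))
    (Eventually.of_forall fun w =>
      (continuousOn_stableKernel s w).aestronglyMeasurable measurableSet_Ioi) ?_
    (integrableOn_Ioi_min_mul_mul_rpow hs0 hs1 (by positivity) zero_le_two)
    (Eventually.of_forall fun t => Continuous.continuousWithinAt (by unfold stableKernel; fun_prop))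
  filter_upwards [self_mem_nhdsWithin, mem_nhdsWithin_of_mem_nhds (Metric.ball_mem_nhds z one_pos)]
    with w (hw : 0 ≤ w.re) hwz
  filter_upwards [ae_restrict_mem measurableSet_Ioi] with t (ht : 0 < t)
  refine (norm_stableKernel_le hw ht).trans (mul_le_mul_of_nonneg_right ?_ (rpow_nonneg ht.le _))
  have : ‖w‖ ≤ ‖z‖ + 1 := norm_le_norm_add_const_of_dist_le (Metric.mem_ball.mp hwz).le
  gcongr

theorem integral_stableKernel_of_re_pos (hs0 : 0 < s.re) (hs1 : s.re < 1) (hz : 0 < z.re) :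
    ∫ t in Ioi 0, stableKernel s z t = Complex.Gamma (-s) * z ^ s := by
  have hU : IsOpen {w : ℂ | 0 < w.re} := isOpen_lt continuous_const Complex.continuous_re
  have hF : AnalyticOnNhd ℂ (fun w => ∫ t in Ioi 0, stableKernel s w t) {w | 0 < w.re} :=
    DifferentiableOn.analyticOnNhd (fun w hw =>
      (differentiableAt_integral_stableKernel hs0 hs1 hw).differentiableWithinAt) hU
  have hG : AnalyticOnNhd ℂ (fun w => Complex.Gamma (-s) * w ^ s) {w | 0 < w.re} :=
    DifferentiableOn.analyticOnNhd (fun w (hw : 0 < w.re) =>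
      ((differentiableAt_id.cpow_const (Or.inl hw)).const_mul _).differentiableWithinAt) hU
  have hreal : Tendsto ((↑) : ℝ → ℂ) (𝓝[≠] 1) (𝓝[≠] 1) := by
    rw [tendsto_nhdsWithin_iff]
    exact ⟨tendsto_nhdsWithin_of_tendsto_nhds Complex.continuous_ofReal.continuousAt,
      eventually_nhdsWithin_iff.mpr (Eventually.of_forall fun t ht => Complex.ofReal_ne_one.mpr ht)⟩
  refine hF.eqOn_of_preconnected_of_frequently_eq hG (convex_halfSpace_re_gt 0).isPreconnected
    (z₀ := 1) (by simp) (hreal.frequently (Eventually.frequently ?_)) hz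
  filter_upwards [nhdsWithin_le_nhds (eventually_gt_nhds one_pos)] with x hx
  exact integral_stableKernel_ofReal hs0 hs1 hx

theorem integral_stableKernel (hs0 : 0 < s.re) (hs1 : s.re < 1) (hz : 0 ≤ z.re) :
    ∫ t in Ioi 0, stableKernel s z t = Complex.Gamma (-s) * z ^ s :=
  EqOn.of_subset_closure (s := {w : ℂ | 0 < w.re})
    (f := fun w => ∫ t in Ioi 0, stableKernel s w t)
    (fun _ hw => integral_stableKernel_of_re_pos hs0 hs1 hw)
    (continuousOn_integral_stableKernel hs0 hs1)
    (fun _ hw => (continuousAt_const.mul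
      (Complex.continuousAt_cpow_const_of_re_pos (Or.inl hw) hs0)).continuousWithinAt)
    (ofPred_subset_ofPred.mpr fun _ => le_of_lt) (Complex.closure_setOfPred_lt_re 0).ge hz

theorem Complex.Gamma_neg_ne_zero (hs0 : 0 < s.re) (hs1 : s.re < 1) : Complex.Gamma (-s) ≠ 0 :=
  Complex.Gamma_ne_zero fun m hm => by
    rcases m with _ | m
    · simp [neg_eq_zero.mp (by simpa using hm)] at hs0
    · have := congrArg Complex.re (neg_inj.mp hm)
      simp at this
      linarith

theorem ilambda_pos_pow_eq_general (α lam : ℝ) (hα : 0 < α) (hα1 : α < 1) :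
    ∃ L : ℂ,
      Tendsto (fun p : ℝ × ℝ =>
          ∫ t in p.1..p.2,
            (Complex.exp (-(Complex.I * (lam : ℂ) * (t : ℂ))) - 1) * (t : ℂ) ^ (-(1 + (α : ℂ))))
        ((nhdsWithin 0 (Set.Ioi 0)) ×ˢ atTop) (nhds L) ∧
      (Complex.I * (lam : ℂ)) ^ ((α : ℂ)) = (1 / Complex.Gamma (-(α : ℂ))) * L := by
  have hs0 : 0 < (α : ℂ).re := by simpa using hα
  have hs1 : (α : ℂ).re < 1 := by simpa using hα1
  have hz : 0 ≤ (Complex.I * lam).re := by simp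
  refine ⟨∫ t in Ioi 0, stableKernel α (Complex.I * lam) t,
    tendsto_intervalIntegral_integral_Ioi (integrableOn_stableKernel hs0 hs1 hz) tendsto_fst
      tendsto_snd, ?_⟩
  rw [integral_stableKernel hs0 hs1 hz, one_div,
    inv_mul_cancel_left₀ (Complex.Gamma_neg_ne_zero hs0 hs1)]

/-- For `0 < α < 1` and real `λ ≠ 0`,
`(iλ)^{α} = (1/Γ(-α)) ∫₀^∞ (e^{-iλt} - 1) t^{-(1+α)} dt`, the integral being improper. -/
theorem ilambda_pos_pow_eq (α lam : ℝ) (hα : 0 < α) (hα1 : α < 1) (hlam : lam ≠ 0) :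
    ∃ L : ℂ,
      Tendsto (fun p : ℝ × ℝ =>
          ∫ t in p.1..p.2,
            (Complex.exp (-(Complex.I * (lam : ℂ) * (t : ℂ))) - 1) * (t : ℂ) ^ (-(1 + (α : ℂ))))
        ((nhdsWithin 0 (Set.Ioi 0)) ×ˢ atTop) (nhds L) ∧
      (Complex.I * (lam : ℂ)) ^ ((α : ℂ)) = (1 / Complex.Gamma (-(α : ℂ))) * L :=
  ilambda_pos_pow_eq_general α lam hα hα1
end

section
/- Nonnegativity for the one-sided Dirichlet problem: let 0 < α < 1, a < b real numbers, and φ a Schwartz function with (D_right)^α φ(x) ≥ 0 for all x ∈ [a,b) and φ(x) = 0 for all x ≥ b. Then φ(x) ≥ 0 for all x ≥ a. -/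
/-!
Minimum principle. If `φ` were negative somewhere, its minimum over `[a, b]` would be attained
at some `x₀ < b` with `φ x₀ < 0`; then `φ t ≥ φ x₀` for all `t > x₀`, strictly for `t ≥ b` where
`φ = 0`. So the integral defining `Dright α φ x₀` is positive, and since `Γ(-α) < 0` for
`0 < α < 1`, `Dright α φ x₀ < 0`. The integral converges because a Schwartz function is
Lipschitz (the singularity at `x₀` is then `O((t - x₀)^(-α))`) and bounded (the tail is
`O((t - x₀)^(-1-α))`).
-/

open Real MeasureTheory

/-- The right fractional derivative of order `α`:
`(D_right)^α φ(x) = (1/Γ(-α)) ∫_x^∞ (φ(t) - φ(x))/(t-x)^{1+α} dt`. -/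
noncomputable def Dright (α : ℝ) (φ : ℝ → ℝ) (x : ℝ) : ℝ :=
  (1 / Real.Gamma (-α)) * ∫ t in Set.Ioi x, (φ t - φ x) / (t - x) ^ (1 + α)

open Set Filter
open scoped NNReal

theorem Real.Gamma_neg_of_neg_one_lt_of_neg {s : ℝ} (hs1 : -1 < s) (hs : s < 0) :
    Gamma s < 0 := by
  have h : 0 < s * Gamma s := by
    rw [← Gamma_add_one hs.ne]
    exact Gamma_pos_of_pos (by linarith)
  exact neg_of_mul_pos_right h hs.le

theorem SchwartzMap.exists_lipschitzWith {F : Type*} [NormedAddCommGroup F] [NormedSpace ℝ F]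
    (φ : SchwartzMap ℝ F) : ∃ K, LipschitzWith K φ :=
  ⟨_, lipschitzWith_of_nnnorm_deriv_le φ.differentiable fun x =>
    (SchwartzMap.derivCLM ℝ F φ).toBoundedContinuousFunction.nnnorm_coe_le_nnnorm x⟩

theorem integrableOn_Ioi_sub_rpow {x c s : ℝ} (hs : s < -1) (hxc : x < c) :
    IntegrableOn (fun t => (t - x) ^ s) (Ioi c) := by
  have h := integrableOn_Ioi_rpow_of_lt hs (sub_pos.2 hxc)
  rw [← (measurePreserving_sub_right volume x).integrableOn_comp_preimage
    (MeasurableEquiv.subRight x).measurableEmbedding] at h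
  simp only [Ioi, preimage, mem_ofPred_eq, sub_lt_sub_iff_right, Function.comp_def] at h
  exact h

theorem integrableOn_Ioc_sub_rpow {x c s : ℝ} (hs : -1 < s) :
    IntegrableOn (fun t => (t - x) ^ s) (Ioc x c) := by
  simpa using
    ((intervalIntegral.intervalIntegrable_rpow' hs (a := 0) (b := c - x)).comp_sub_right x).1

theorem integrableOn_Ioi_sub_div_rpow {φ : ℝ → ℝ} {K : ℝ≥0} {M α : ℝ} (hφ : LipschitzWith K φ)
    (hM : ∀ t, |φ t| ≤ M) (hα : 0 < α) (hα1 : α < 1) (x : ℝ) :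
    IntegrableOn (fun t => (φ t - φ x) / (t - x) ^ (1 + α)) (Ioi x) := by
  have hmeas : AEStronglyMeasurable (fun t => (φ t - φ x) / (t - x) ^ (1 + α)) :=
    ((hφ.continuous.measurable.sub_const _).div (by fun_prop)).aestronglyMeasurable
  have habs : ∀ t ∈ Ioi x,
      ‖(φ t - φ x) / (t - x) ^ (1 + α)‖ = |φ t - φ x| / (t - x) ^ (1 + α) := fun t ht => by
    rw [norm_div, norm_of_nonneg (rpow_nonneg (sub_pos.2 ht).le _), norm_eq_abs]
  rw [← Ioc_union_Ioi_eq_Ioi (le_add_of_nonneg_right zero_le_one)]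
  refine IntegrableOn.union ?near ?far
  case near =>
    refine ((integrableOn_Ioc_sub_rpow (x := x) (c := x + 1) (by linarith : -1 < -α)).const_mul
      K).mono' hmeas.restrict ((ae_restrict_iff' measurableSet_Ioc).2 (ae_of_all _ fun t ht => ?_))
    have htx : 0 < t - x := sub_pos.2 ht.1
    have hlip : |φ t - φ x| ≤ K * (t - x) := by
      simpa [Real.dist_eq, abs_of_pos htx] using hφ.dist_le_mul t x
    calc ‖(φ t - φ x) / (t - x) ^ (1 + α)‖ = |φ t - φ x| / (t - x) ^ (1 + α) := habs t ht.1
      _ ≤ K * (t - x) / (t - x) ^ (1 + α) := by gcongr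
      _ = K * (t - x) ^ (-α) := by
        rw [rpow_add htx, rpow_one, rpow_neg htx.le]
        field_simp
  case far =>
    refine ((integrableOn_Ioi_sub_rpow (x := x) (c := x + 1) (by linarith : -(1 + α) < -1)
      (by linarith)).const_mul (2 * M)).mono'
      hmeas.restrict ((ae_restrict_iff' measurableSet_Ioi).2 (ae_of_all _ fun t ht => ?_))
    have hxt : x < t := (lt_add_one x).trans ht
    rw [habs t hxt, rpow_neg (sub_pos.2 hxt).le, ← div_eq_mul_inv]
    gcongr
    calc |φ t - φ x| ≤ |φ t| + |φ x| := abs_sub _ _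
      _ ≤ 2 * M := by linarith [hM t, hM x]

theorem Dright_neg_of_le_of_eventually_lt {α x : ℝ} {φ : ℝ → ℝ} (hα : 0 < α) (hα1 : α < 1)
    (hint : IntegrableOn (fun t => (φ t - φ x) / (t - x) ^ (1 + α)) (Ioi x))
    (hle : ∀ t > x, φ x ≤ φ t) (hlt : ∀ᶠ t in atTop, φ x < φ t) : Dright α φ x < 0 := by
  have hden : ∀ t > x, 0 < (t - x) ^ (1 + α) := fun t ht => rpow_pos_of_pos (sub_pos.2 ht) _
  have hnonneg : 0 ≤ᵐ[volume.restrict (Ioi x)] fun t => (φ t - φ x) / (t - x) ^ (1 + α) :=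
    (ae_restrict_iff' measurableSet_Ioi).2 <| ae_of_all _ fun t ht =>
      div_nonneg (sub_nonneg.2 (hle t ht)) (hden t ht).le
  obtain ⟨c, hc⟩ := eventually_atTop.1 (hlt.and (eventually_gt_atTop x))
  have hsupp : Ioi c ⊆ Function.support (fun t => (φ t - φ x) / (t - x) ^ (1 + α)) ∩ Ioi x :=
    fun t ht =>
      have ⟨hφt, hxt⟩ := hc t ht.le
      ⟨(div_pos (sub_pos.2 hφt) (hden t hxt)).ne', hxt⟩
  have hint_pos : 0 < ∫ t in Ioi x, (φ t - φ x) / (t - x) ^ (1 + α) := by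
    rw [setIntegral_pos_iff_support_of_nonneg_ae hnonneg hint]
    exact (measure_mono hsupp).trans_lt' (by simp)
  have hΓ : 1 / Gamma (-α) < 0 :=
    one_div_neg.2 (Gamma_neg_of_neg_one_lt_of_neg (by linarith) (by linarith))
  exact mul_neg_of_neg_of_pos hΓ hint_pos

/-- Nonnegativity for the one-sided Dirichlet problem. -/
theorem dirichlet_nonneg (α : ℝ) (hα : 0 < α) (hα1 : α < 1)
    (a b : ℝ) (hab : a < b) (φ : SchwartzMap ℝ ℝ)
    (hf : ∀ x ∈ Set.Ico a b, 0 ≤ Dright α (fun y => φ y) x)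
    (hb : ∀ x, b ≤ x → φ x = 0) :
    ∀ x, a ≤ x → 0 ≤ φ x := by
  intro x hax
  by_contra! hneg
  have hxb : x ≤ b := le_of_not_gt fun h => hneg.ne (hb x h.le)
  obtain ⟨x₀, ⟨hax₀, hx₀b⟩, hmin⟩ :=
    isCompact_Icc.exists_isMinOn (nonempty_Icc.2 hab.le) φ.continuous.continuousOn
  have hφx₀ : φ x₀ < 0 := (hmin ⟨hax, hxb⟩).trans_lt hneg
  have hx₀b : x₀ < b := hx₀b.lt_of_ne fun h => hφx₀.ne (h ▸ hb b le_rfl)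
  have hle : ∀ t > x₀, φ x₀ ≤ φ t := fun t ht =>
    (le_or_gt t b).elim (fun htb => hmin ⟨hax₀.trans ht.le, htb⟩)
      fun hbt => hb t hbt.le ▸ hφx₀.le
  have hlt : ∀ᶠ t in atTop, φ x₀ < φ t :=
    (eventually_ge_atTop b).mono fun t hbt => hb t hbt ▸ hφx₀
  obtain ⟨K, hK⟩ := φ.exists_lipschitzWith
  have hint := integrableOn_Ioi_sub_div_rpow hK (φ.norm_le_seminorm ℝ) hα hα1 x₀
  exact (hf x₀ ⟨hax₀, hx₀b⟩).not_gt (Dright_neg_of_le_of_eventually_lt hα hα1 hint hle hlt)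
end
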